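/- (Proposition 2: advantageous constraints imply componentwise improvement.) In the finite MDP setup, let d be a positive integer and let r_0, …, r_{d−1} : X → A → ℝ be bounded rewards. Let π and π_b be policies such that for every state x ∈ X and every k ∈ {0,…,d−1}: Σ_{a∈A} π(a|x)·A^{π_b}_{r_k,p}(x,a) ≥ 0. Then for every k ∈ {0,…,d−1}: J^{π}_{r_k,p} − J^{π_b}_{r_k,p} ≥ 0. -/
import Mathlib


open scoped BigOperators

namespace MOSPIBB

variable {X A : Type*} [Fintype X] [Fintype A]

/-- Time-`t` state distribution of policy `π` started at `x`. -/
noncomputable def stateDist (p : X → A → PMF X) (π : X → PMF A) (x : X) : ℕ → PMF X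
  | 0 => PMF.pure x
  | t + 1 => (stateDist p π x t).bind fun s => (π s).bind (p s)

/-- Value function. -/
noncomputable def V (p : X → A → PMF X) (γ : ℝ) (r : X → A → ℝ) (π : X → PMF A) (x : X) : ℝ :=
  ∑' t : ℕ, γ ^ t * ∑ s : X, ∑ a : A, (stateDist p π x t s).toReal * (π s a).toReal * r s a

/-- State-action value function. -/
noncomputable def Q (p : X → A → PMF X) (γ : ℝ) (r : X → A → ℝ) (π : X → PMF A) (x : X) (a : A) : ℝ :=
  r x a + γ * ∑ x' : X, (p x a x').toReal * V p γ r π x'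

/-- Advantage function. -/
noncomputable def Adv (p : X → A → PMF X) (γ : ℝ) (r : X → A → ℝ) (π : X → PMF A) (x : X) (a : A) : ℝ :=
  Q p γ r π x a - V p γ r π x

/-- Return from the initial state `x0`. -/
noncomputable def J (p : X → A → PMF X) (γ : ℝ) (r : X → A → ℝ) (π : X → PMF A) (x0 : X) : ℝ :=
  V p γ r π x0

/-- Discounted state occupancy. -/
noncomputable def dOcc (p : X → A → PMF X) (γ : ℝ) (π : X → PMF A) (x0 : X) (s : X) : ℝ :=
  ∑' t : ℕ, γ ^ t * (stateDist p π x0 t s).toReal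

/-- Discounted state-action occupancy. -/
noncomputable def rhoOcc (p : X → A → PMF X) (γ : ℝ) (π : X → PMF A) (x0 : X) (s : X) (a : A) : ℝ :=
  ∑' t : ℕ, γ ^ t * (stateDist p π x0 t s).toReal * (π s a).toReal

end MOSPIBB



open MOSPIBB

lemma pmf_sum_toReal {Y : Type*} [Fintype Y] (q : PMF Y) :
    ∑ y : Y, (q y).toReal = 1 := by
  have h := q.tsum_coe
  rw [tsum_fintype] at h
  rw [← ENNReal.toReal_sum (fun y _ => q.apply_ne_top y), h, ENNReal.toReal_one]

lemma stateDist_succ_toReal {X A : Type*} [Fintype X] [Fintype A]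
    (p : X → A → PMF X) (π : X → PMF A) (x : X) (t : ℕ) (s' : X) :
    (stateDist p π x (t+1) s').toReal
      = ∑ s : X, (stateDist p π x t s).toReal *
          ∑ a : A, (π s a).toReal * (p s a s').toReal := by
  have h0 : stateDist p π x (t+1) = (stateDist p π x t).bind fun s => (π s).bind (p s) := rfl
  rw [h0, PMF.bind_apply, tsum_fintype,
    ENNReal.toReal_sum (fun s _ => ENNReal.mul_ne_top ((stateDist p π x t).apply_ne_top s)
      (((π s).bind (p s)).apply_ne_top s'))]
  refine Finset.sum_congr rfl fun s _ => ?_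
  rw [ENNReal.toReal_mul, PMF.bind_apply, tsum_fintype,
    ENNReal.toReal_sum (fun a _ => ENNReal.mul_ne_top ((π s).apply_ne_top a)
      ((p s a).apply_ne_top s'))]
  refine congrArg _ (Finset.sum_congr rfl fun a _ => ?_)
  rw [ENNReal.toReal_mul]

open MOSPIBB in
/-- Proposition 2: if a policy `π` satisfies the advantage constraints with respect to a
baseline `πb` for each of the `d` reward functions, then it improves on `πb` along every
objective. -/
theorem advantageous_constraints_imply_improvement
    {X A : Type*} [Fintype X] [Fintype A] [Nonempty X] [Nonempty A]
    (p : X → A → PMF X) (γ : ℝ) (hγ0 : 0 ≤ γ) (hγ1 : γ < 1) (x0 : X)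
    (d : ℕ) (hd : 0 < d)
    (rtop : ℝ) (hrtop : 0 ≤ rtop)
    (r : Fin d → X → A → ℝ) (hr : ∀ k s a, |r k s a| ≤ rtop)
    (π πb : X → PMF A)
    (hadv : ∀ (x : X) (k : Fin d),
      0 ≤ ∑ a : A, (π x a).toReal * Adv p γ (r k) πb x a) :
    ∀ k : Fin d, 0 ≤ J p γ (r k) π x0 - J p γ (r k) πb x0 := by
  intro k
  classical
  set W : X → ℝ := fun s => V p γ (r k) πb s with hW
  have hWdef : ∀ s, V p γ (r k) πb s = W s := fun s => rfl
  set μ : ℕ → X → ℝ := fun t s => (stateDist p π x0 t s).toReal with hμ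
  have hμ0 : ∀ t s, 0 ≤ μ t s := by
    intro t s; rw [hμ]; exact ENNReal.toReal_nonneg
  have hμ1 : ∀ t, ∑ s : X, μ t s = 1 := by
    intro t; rw [hμ]; exact pmf_sum_toReal _
  set R : ℕ → ℝ := fun t => ∑ s : X, ∑ a : A, μ t s * ((π s a).toReal * r k s a) with hR
  set F : ℕ → ℝ := fun t => ∑ s : X, μ t s * W s with hF
  set g : ℕ → ℝ := fun t => ∑ s : X, μ t s * ∑ a : A, (π s a).toReal * Adv p γ (r k) πb s a
    with hg
  have hg0 : ∀ t, 0 ≤ g t := by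
    intro t
    rw [hg]
    exact Finset.sum_nonneg fun s _ => mul_nonneg (hμ0 t s) (hadv s k)
  -- bound on W
  set B : ℝ := ∑ s : X, |W s| with hB
  have hB0 : 0 ≤ B := by
    rw [hB]; exact Finset.sum_nonneg fun s _ => abs_nonneg _
  have hWB : ∀ s, |W s| ≤ B := by
    intro s
    rw [hB]
    exact Finset.single_le_sum (f := fun i => |W i|) (fun i _ => abs_nonneg _) (Finset.mem_univ s)
  -- bounds
  have hRb : ∀ t, |R t| ≤ rtop := by
    intro t
    rw [hR]
    have h1 : |∑ s : X, ∑ a : A, μ t s * ((π s a).toReal * r k s a)| ≤ ∑ s : X, ∑ a : A, μ t s * ((π s a).toReal * rtop) := by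
      refine (Finset.abs_sum_le_sum_abs _ _).trans (Finset.sum_le_sum fun s _ => ?_)
      refine (Finset.abs_sum_le_sum_abs _ _).trans (Finset.sum_le_sum fun a _ => ?_)
      rw [abs_mul, abs_mul, abs_of_nonneg (hμ0 t s), abs_of_nonneg ENNReal.toReal_nonneg]
      exact mul_le_mul_of_nonneg_left
        (mul_le_mul_of_nonneg_left (hr k s a) ENNReal.toReal_nonneg) (hμ0 t s)
    refine h1.trans_eq ?_
    have h2 : ∀ s : X, ∑ a : A, μ t s * ((π s a).toReal * rtop) = μ t s * rtop := by
      intro s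
      rw [← Finset.mul_sum, ← Finset.sum_mul, pmf_sum_toReal, one_mul]
    simp_rw [h2]
    rw [← Finset.sum_mul, hμ1, one_mul]
  have hFb : ∀ t, |F t| ≤ B := by
    intro t
    rw [hF]
    have h1 : |∑ s : X, μ t s * W s| ≤ ∑ s : X, μ t s * B := by
      refine (Finset.abs_sum_le_sum_abs _ _).trans (Finset.sum_le_sum fun s _ => ?_)
      rw [abs_mul, abs_of_nonneg (hμ0 t s)]
      exact mul_le_mul_of_nonneg_left (hWB s) (hμ0 t s)
    refine h1.trans_eq ?_
    rw [← Finset.sum_mul, hμ1, one_mul]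
  -- summability
  have hgeo : ∀ C : ℝ, Summable (fun t : ℕ => C * γ ^ t) :=
    fun C => (summable_geometric_of_lt_one hγ0 hγ1).mul_left C
  have habs : ∀ (h : ℕ → ℝ) (C : ℝ), (∀ t, |h t| ≤ C) → Summable (fun t => γ ^ t * h t) := by
    intro h C hC
    refine Summable.of_abs (Summable.of_nonneg_of_le (fun t => abs_nonneg _)
      (fun t => ?_) (hgeo C))
    rw [abs_mul, abs_of_nonneg (pow_nonneg hγ0 t), mul_comm]
    exact mul_le_mul_of_nonneg_right (hC t) (pow_nonneg hγ0 t)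
  have hSa : Summable (fun t => γ ^ t * R t) := habs R rtop hRb
  have hSc : Summable (fun t => γ ^ t * F t) := habs F B hFb
  have hSb : Summable (fun t => γ ^ (t+1) * F (t+1)) :=
    (summable_nat_add_iff (f := fun t => γ ^ t * F t) 1).mpr hSc
  -- key identity
  have hgt : ∀ t, g t = R t + γ * F (t+1) - F t := by
    intro t
    have hM : F (t+1) = ∑ s : X, ∑ a : A,
        μ t s * ((π s a).toReal * ∑ s' : X, (p s a s').toReal * W s') := by
      rw [hF]
      have hsucc : ∀ s' : X, μ (t+1) s'
          = ∑ s : X, μ t s * ∑ a : A, (π s a).toReal * (p s a s').toReal := by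
        intro s'; rw [hμ]; exact stateDist_succ_toReal p π x0 t s'
      calc (∑ s' : X, μ (t+1) s' * W s')
          = ∑ s' : X, (∑ s : X, μ t s * ∑ a : A, (π s a).toReal * (p s a s').toReal) * W s' :=
            Finset.sum_congr rfl fun s' _ => by rw [hsucc s']
        _ = _ := by
            simp only [Finset.sum_mul, Finset.mul_sum]
            rw [Finset.sum_comm]
            refine Finset.sum_congr rfl fun s _ => ?_
            rw [Finset.sum_comm]
            exact Finset.sum_congr rfl fun a _ => Finset.sum_congr rfl fun s' _ => by ring
    have hstep : ∀ s : X, (∑ a : A, (π s a).toReal * Adv p γ (r k) πb s a)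
        = (∑ a : A, (π s a).toReal * r k s a)
          + γ * (∑ a : A, (π s a).toReal * ∑ s' : X, (p s a s').toReal * W s') - W s := by
      intro s
      have h1 : ∑ a : A, (π s a).toReal * W s = W s := by
        rw [← Finset.sum_mul, pmf_sum_toReal, one_mul]
      simp only [Adv, Q, hWdef]
      calc ∑ a : A, (π s a).toReal * (r k s a + γ * ∑ s' : X, (p s a s').toReal * W s' - W s)
          = ∑ a : A, ((π s a).toReal * r k s a
              + γ * ((π s a).toReal * ∑ s' : X, (p s a s').toReal * W s')
              - (π s a).toReal * W s) :=
            Finset.sum_congr rfl fun a _ => by ring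
        _ = _ := by
            rw [Finset.sum_sub_distrib, Finset.sum_add_distrib, h1, ← Finset.mul_sum]
    rw [hg, hR, hM]
    calc (∑ s : X, μ t s * ∑ a : A, (π s a).toReal * Adv p γ (r k) πb s a)
        = ∑ s : X, (μ t s * ∑ a : A, (π s a).toReal * r k s a
            + γ * (μ t s * ∑ a : A, (π s a).toReal * ∑ s' : X, (p s a s').toReal * W s')
            - μ t s * W s) :=
          Finset.sum_congr rfl fun s _ => by rw [hstep s]; ring
      _ = _ := by
          rw [Finset.sum_sub_distrib, Finset.sum_add_distrib, ← Finset.mul_sum, hF]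
          simp only [Finset.mul_sum]
  have hkey : ∀ t, γ ^ t * g t = (γ ^ t * R t + γ ^ (t+1) * F (t+1)) - γ ^ t * F t := by
    intro t
    rw [hgt t, pow_succ]
    ring
  have hSg : Summable (fun t => γ ^ t * g t) := by
    have : (fun t => γ ^ t * g t)
        = fun t => (γ ^ t * R t + γ ^ (t+1) * F (t+1)) - γ ^ t * F t := funext hkey
    rw [this]
    exact (hSa.add hSb).sub hSc
  have e1 : ∑' t : ℕ, γ ^ t * g t
      = ((∑' t : ℕ, γ ^ t * R t) + ∑' t : ℕ, γ ^ (t+1) * F (t+1)) - ∑' t : ℕ, γ ^ t * F t := by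
    calc (∑' t : ℕ, γ ^ t * g t)
        = ∑' t : ℕ, ((γ ^ t * R t + γ ^ (t+1) * F (t+1)) - γ ^ t * F t) :=
          tsum_congr hkey
      _ = _ := by rw [Summable.tsum_sub (hSa.add hSb) hSc, Summable.tsum_add hSa hSb]
  have e2 : ∑' t : ℕ, γ ^ (t+1) * F (t+1) = (∑' t : ℕ, γ ^ t * F t) - γ ^ 0 * F 0 := by
    have h := Summable.tsum_eq_zero_add hSc
    linarith [h]
  have e3 : V p γ (r k) π x0 = ∑' t : ℕ, γ ^ t * R t := by
    rw [V]
    refine tsum_congr fun t => ?_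
    rw [hR]
    refine congrArg _ (Finset.sum_congr rfl fun s _ => Finset.sum_congr rfl fun a _ => ?_)
    rw [hμ, mul_assoc]
  have e4 : γ ^ 0 * F 0 = V p γ (r k) πb x0 := by
    rw [pow_zero, one_mul, hF]
    have h0 : ∀ s : X, μ 0 s = if s = x0 then (1:ℝ) else 0 := by
      intro s
      rw [hμ]
      show ((PMF.pure x0) s).toReal = _
      rw [PMF.pure_apply]
      split <;> simp
    calc (∑ s : X, μ 0 s * W s)
        = ∑ s : X, (if s = x0 then (1:ℝ) else 0) * W s :=
          Finset.sum_congr rfl fun s _ => by rw [h0 s]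
      _ = W x0 := by simp
  have hpos : 0 ≤ ∑' t : ℕ, γ ^ t * g t :=
    tsum_nonneg fun t => mul_nonneg (pow_nonneg hγ0 t) (hg0 t)
  have : ∑' t : ℕ, γ ^ t * g t = V p γ (r k) π x0 - V p γ (r k) πb x0 := by
    rw [e1, e2, ← e3, e4]
    ring
  simp only [J]
  linarith [hpos, this]
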